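/- arXiv:2507.18520 — 3 statements merged into one kernel-verified Lean document; each statement's English description precedes it below -/
import Mathlib

section
/- Let D be the n×n matrix of squared pairwise distances of points x_1, ..., x_n in a metric space (with D_{ii} = +∞, so only derangements are feasible), and suppose the points admit a partition into blocks each of size at least 4 with weighted average squared diameter (1/n)∑_j |P_j| diam(P_j)² ≤ c·n^{−α}. Then the minimum over fixed-point-free permutations σ of (1/n)∑_{i=1}^n D_{i,σ(i)} is at most c·n^{−α}; moreover, for any fixed derangement τ, the minimum over derangements σ satisfying σ(i) ≠ τ(i) for all i of (1/n)∑_{i=1}^n D_{i,σ(i)} is also at most c·n^{−α}. -/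
/-!
A permutation mapping every block `P_j` into itself moves each point by at most `diam P_j`, so its
cost is at most `(1/n) ∑ |P_j| diam(P_j)²`. Such a permutation with `σ i ≠ i` and `σ i ≠ τ i`
exists by Hall's theorem: each `i` excludes at most two points of its block and, `τ` being
injective, each point is excluded by at most two elements, which blocks of size `≥ 4` absorb.
-/

open Finset

lemma card_le_card_filter_exists_not_of_exclusions_le {α : Type*} (F : α → α → Prop)
    [DecidableRel F] {U s : Finset α} {m : ℕ} (hU : 2 * m ≤ #U)
    (hrow : ∀ i ∈ s, #{z ∈ U | F i z} ≤ m) (hcol : ∀ z ∈ U, #{i ∈ s | F i z} ≤ m)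
    (hs : s ⊆ U) : #s ≤ #{z ∈ U | ∃ i ∈ s, ¬ F i z} := by
  rcases le_or_gt #s m with hsm | hms
  · -- a single `i ∈ s` already admits `#U - m ≥ m ≥ #s` points
    obtain rfl | ⟨i, hi⟩ := s.eq_empty_or_nonempty
    · simp
    have hsplit : #{z ∈ U | F i z} + #{z ∈ U | ¬ F i z} = #U :=
      card_filter_add_card_filter_not _
    have hsub : ({z ∈ U | ¬ F i z} : Finset α) ⊆ {z ∈ U | ∃ i ∈ s, ¬ F i z} :=
      monotone_filter_right _ fun _ _ hz => ⟨i, hi, hz⟩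
    have := hrow i hi
    have := card_le_card hsub
    omega
  · -- a point of `U` excluded by every element of `s` would be excluded more than `m` times
    have hcover : U ⊆ {z ∈ U | ∃ i ∈ s, ¬ F i z} := by
      intro z hz
      refine mem_filter.mpr ⟨hz, ?_⟩
      by_contra! hall
      have := hcol z hz
      rw [filter_true_of_mem hall] at this
      omega
    exact (card_le_card hs).trans (card_le_card hcover)

section BlockPerm

variable {α β : Type*} [Fintype α] [DecidableEq α] [DecidableEq β]

lemma exists_perm_block_preserving_avoiding (B : α → β) (F : α → α → Prop) [DecidableRel F]
    {m : ℕ} (hblock : ∀ i, 2 * m ≤ #{z | B z = B i})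
    (hrow : ∀ i, #{z | B z = B i ∧ F i z} ≤ m) (hcol : ∀ z, #{i | B i = B z ∧ F i z} ≤ m) :
    ∃ σ : Equiv.Perm α, ∀ i, B (σ i) = B i ∧ ¬ F i (σ i) := by
  have hall (A : Finset α) : #A ≤ #{z | ∃ i ∈ A, B z = B i ∧ ¬ F i z} := by
    rw [card_eq_sum_card_fiberwise fun i _ => mem_image_of_mem B (mem_univ i),
      card_eq_sum_card_fiberwise (t := univ.image B) fun z _ => mem_image_of_mem B (mem_univ z)]
    refine sum_le_sum fun j hj => ?_
    obtain ⟨i₀, -, rfl⟩ := mem_image.mp hj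
    have hfiber : {z ∈ ({z | ∃ i ∈ A, B z = B i ∧ ¬ F i z} : Finset α) | B z = B i₀} =
        {z ∈ ({z | B z = B i₀} : Finset α) | ∃ i ∈ A.filter (B · = B i₀), ¬ F i z} := by
      ext z
      simp only [mem_filter, mem_univ, true_and]
      grind
    rw [hfiber]
    refine card_le_card_filter_exists_not_of_exclusions_le F (hblock i₀) ?_ ?_ ?_
    · intro i hi
      rw [filter_filter, ← (mem_filter.mp hi).2]
      exact hrow i
    · intro z hz
      refine (card_le_card fun i hi => ?_).trans (hcol z)
      simp only [mem_filter, mem_univ, true_and] at hi hz ⊢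
      exact ⟨hi.1.2.trans hz.symm, hi.2⟩
    · exact filter_subset_filter _ (subset_univ A)
  obtain ⟨f, hf_inj, hf⟩ := (Fintype.all_card_le_filter_rel_iff_exists_injective _).mp hall
  exact ⟨Equiv.ofBijective f hf_inj.bijective_of_finite, hf⟩

lemma exists_perm_block_preserving_ne_self_ne_apply (B : α → β)
    (hblock : ∀ i, 4 ≤ #{z | B z = B i}) {g : α → α} (hg : Function.Injective g) :
    ∃ σ : Equiv.Perm α, ∀ i, B (σ i) = B i ∧ σ i ≠ i ∧ σ i ≠ g i := by
  have hrow (i : α) : #{z | B z = B i ∧ (z = i ∨ z = g i)} ≤ 2 := by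
    refine (card_le_card (t := {i, g i}) fun z hz => ?_).trans card_le_two
    simp only [mem_filter, mem_univ, true_and] at hz
    simpa using hz.2
  have hcol (z : α) : #{i | B i = B z ∧ (z = i ∨ z = g i)} ≤ 2 := by
    have hpre : #{i | g i = z} ≤ 1 :=
      card_le_one.mpr fun a ha b hb => hg (by simp_all)
    refine (card_le_card (t := insert z ({i | g i = z} : Finset α)) fun i hi => ?_).trans
      ((card_insert_le _ _).trans (by omega))
    simp only [mem_filter, mem_univ, true_and] at hi
    rcases hi.2 with rfl | h
    · exact mem_insert_self _ _
    · exact mem_insert_of_mem (by simpa using h.symm)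
  obtain ⟨σ, hσ⟩ := exists_perm_block_preserving_avoiding B (fun i z => z = i ∨ z = g i)
    (m := 2) hblock hrow hcol
  exact ⟨σ, fun i => ⟨(hσ i).1, fun h => (hσ i).2 (Or.inl h), fun h => (hσ i).2 (Or.inr h)⟩⟩

end BlockPerm

lemma sum_sq_dist_le_sum_card_mul_sq_diam {α β T : Type*} [Fintype α] [Fintype β]
    [DecidableEq β] [PseudoMetricSpace T] (x : α → T) (B : α → β) {σ : α → α}
    (hσ : ∀ i, B (σ i) = B i) :
    ∑ i, dist (x i) (x (σ i)) ^ 2 ≤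
      ∑ j, (#{i | B i = j} : ℝ) * Metric.diam (x '' {i | B i = j}) ^ 2 := by
  have hdist (i : α) : dist (x i) (x (σ i)) ≤ Metric.diam (x '' {z | B z = B i}) :=
    Metric.dist_le_diam_of_mem ((Set.toFinite _).image x).isBounded ⟨i, rfl, rfl⟩
      ⟨σ i, hσ i, rfl⟩
  calc ∑ i, dist (x i) (x (σ i)) ^ 2
      ≤ ∑ i, Metric.diam (x '' {z | B z = B i}) ^ 2 :=
        sum_le_sum fun i _ => pow_le_pow_left₀ dist_nonneg (hdist i) 2
    _ = ∑ j, (#{i | B i = j} : ℝ) * Metric.diam (x '' {i | B i = j}) ^ 2 := by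
        rw [← sum_fiberwise univ B]
        refine sum_congr rfl fun j _ => ?_
        rw [sum_congr rfl fun i hi => by rw [(mem_filter.mp hi).2], sum_const, nsmul_eq_mul]

theorem lsap_cost_bound {T : Type*} [MetricSpace T] (n k : ℕ)
    (x : Fin n → T) (B : Fin n → Fin k) (c α : ℝ)
    (h4 : ∀ j : Fin k, 4 ≤ (Finset.univ.filter (fun i => B i = j)).card)
    (havg : (1 / (n : ℝ)) * ∑ j : Fin k,
        ((Finset.univ.filter (fun i => B i = j)).card : ℝ) *
          (Metric.diam (x '' {i | B i = j})) ^ 2 ≤ c * (n : ℝ) ^ (-α)) :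
    (∃ σ : Equiv.Perm (Fin n), (∀ i, σ i ≠ i) ∧
      (1 / (n : ℝ)) * ∑ i, dist (x i) (x (σ i)) ^ 2 ≤ c * (n : ℝ) ^ (-α)) ∧
    (∀ τ : Equiv.Perm (Fin n), (∀ i, τ i ≠ i) →
      ∃ σ : Equiv.Perm (Fin n), (∀ i, σ i ≠ i) ∧ (∀ i, σ i ≠ τ i) ∧
        (1 / (n : ℝ)) * ∑ i, dist (x i) (x (σ i)) ^ 2 ≤ c * (n : ℝ) ^ (-α)) := by
  have hcost {σ : Equiv.Perm (Fin n)} (hσ : ∀ i, B (σ i) = B i) :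
      (1 / (n : ℝ)) * ∑ i, dist (x i) (x (σ i)) ^ 2 ≤ c * (n : ℝ) ^ (-α) :=
    (mul_le_mul_of_nonneg_left (sum_sq_dist_le_sum_card_mul_sq_diam x B hσ)
      (by positivity)).trans havg
  have hblock (i : Fin n) : 4 ≤ #{z | B z = B i} := h4 (B i)
  refine ⟨?_, fun τ _ => ?_⟩
  · obtain ⟨σ, hσ⟩ := exists_perm_block_preserving_ne_self_ne_apply B hblock
      Function.injective_id
    exact ⟨σ, fun i => (hσ i).2.1, hcost fun i => (hσ i).1⟩
  · obtain ⟨σ, hσ⟩ := exists_perm_block_preserving_ne_self_ne_apply B hblock τ.injective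
    exact ⟨σ, fun i => (hσ i).2.1, fun i => (hσ i).2.2, hcost fun i => (hσ i).1⟩
end

section
/- Let p ∈ [0,1] and let S be a binomial random variable with parameters n and p, where n ≥ 6. Then P(S ∈ {1,2,3}) ≤ (1/3)·n³·e^{−p(n−3)}. -/
open Finset

theorem binomial_small_count_bound (n : ℕ) (hn : 6 ≤ n) (p : ℝ)
    (hp0 : 0 ≤ p) (hp1 : p ≤ 1) :
    ∑ k ∈ ({1, 2, 3} : Finset ℕ), (n.choose k : ℝ) * p ^ k * (1 - p) ^ (n - k) ≤
      (1 / 3) * (n : ℝ) ^ 3 * Real.exp (-(p * ((n : ℝ) - 3))) := by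
  set E := Real.exp (-(p * ((n : ℝ) - 3))) with hE
  have hEpos : 0 < E := Real.exp_pos _
  have h1p : 0 ≤ 1 - p := by linarith
  have h1p' : 1 - p ≤ 1 := by linarith
  -- key bound on (1-p)^(n-k)
  have key : ∀ k : ℕ, k ≤ 3 → (1 - p) ^ (n - k) ≤ E := by
    intro k hk
    have ha : (1 - p) ^ (n - k) ≤ (1 - p) ^ (n - 3) :=
      pow_le_pow_of_le_one h1p h1p' (by omega)
    have hb : (1 - p) ^ (n - 3) ≤ Real.exp (-p) ^ (n - 3) := by
      apply pow_le_pow_left₀ h1p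
      linarith [Real.add_one_le_exp (-p)]
    have hc : Real.exp (-p) ^ (n - 3) = E := by
      rw [← Real.exp_nat_mul, hE]
      congr 1
      have : ((n - 3 : ℕ) : ℝ) = (n : ℝ) - 3 := by
        rw [Nat.cast_sub (by omega)]; norm_num
      rw [this]; ring
    calc (1 - p) ^ (n - k) ≤ (1 - p) ^ (n - 3) := ha
      _ ≤ Real.exp (-p) ^ (n - 3) := hb
      _ = E := hc
  have hterm : ∀ k : ℕ, k ≤ 3 → (n.choose k : ℝ) * p ^ k * (1 - p) ^ (n - k) ≤
      ((n : ℝ) ^ k / (k.factorial : ℝ)) * E := by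
    intro k hk
    have hch : (n.choose k : ℝ) ≤ (n : ℝ) ^ k / (k.factorial : ℝ) := Nat.choose_le_pow_div k n
    have hpk : p ^ k ≤ 1 := pow_le_one₀ hp0 hp1
    have h0 : (0:ℝ) ≤ (n.choose k : ℝ) := by positivity
    calc (n.choose k : ℝ) * p ^ k * (1 - p) ^ (n - k)
        ≤ (n.choose k : ℝ) * 1 * E := by
          apply mul_le_mul (by nlinarith [pow_nonneg hp0 k]) (key k hk)
            (pow_nonneg h1p _) (by nlinarith)
      _ = (n.choose k : ℝ) * E := by ring
      _ ≤ ((n : ℝ) ^ k / (k.factorial : ℝ)) * E := by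
          apply mul_le_mul_of_nonneg_right hch hEpos.le
  have hsum : ∑ k ∈ ({1, 2, 3} : Finset ℕ), (n.choose k : ℝ) * p ^ k * (1 - p) ^ (n - k)
      = (n.choose 1 : ℝ) * p ^ 1 * (1 - p) ^ (n - 1)
        + (n.choose 2 : ℝ) * p ^ 2 * (1 - p) ^ (n - 2)
        + (n.choose 3 : ℝ) * p ^ 3 * (1 - p) ^ (n - 3) := by
    simp [Finset.sum_insert, Finset.mem_insert]; ring
  rw [hsum]
  have h1 := hterm 1 (by norm_num)
  have h2 := hterm 2 (by norm_num)
  have h3 := hterm 3 (by norm_num)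
  norm_num [Nat.factorial] at h1 h2 h3
  have hn' : (6 : ℝ) ≤ (n : ℝ) := by exact_mod_cast hn
  have hcube : (n : ℝ) + (n : ℝ) ^ 2 / 2 + (n : ℝ) ^ 3 / 6 ≤ (1 / 3) * (n : ℝ) ^ 3 := by
    nlinarith
  have := mul_le_mul_of_nonneg_right hcube hEpos.le
  simp only [Nat.choose_one_right] at *
  linarith
end

section
/- Averaging the per-point bound: under the assumptions of the previous estimate and additionally ∑_i D_{i,σ₁(i)} ≤ nδ₁, ∑_i D_{i,σ₂(i)} ≤ nδ₂ for the squared distance matrix D of points in a metric space, one has (1/n) ∑_{i=1}^n |r̂_i − r_i| ≤ (3/2)(δ₁ + δ₂) + (3/2)ε. -/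
/-!
Writing `Dt = D + r_i + r_j + e`, the offsets `r_{σ₁ i}` and `r_{σ₂ i}` cancel in `r̂_i`, leaving
`r̂_i - r_i = (D_{i,σ₁ i} + D_{i,σ₂ i} - D_{σ₁ i,σ₂ i} + e - e' - e'') / 2`. Since `D ≥ 0`, this is
bounded by half the sum of the three squared distances plus `3ε/2`. Summing over `i`, the squared
triangle inequality `D_{σ₁ i,σ₂ i} ≤ 2 D_{i,σ₁ i} + 2 D_{i,σ₂ i}` bounds the third sum by the other
two, so the total is at most `(3/2)(∑ D_{i,σ₁ i} + ∑ D_{i,σ₂ i}) + 3nε/2`.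
-/

open Finset

theorem dist_sq_le_two_mul_dist_sq_add {T : Type*} [PseudoMetricSpace T] (x y z : T) :
    dist y z ^ 2 ≤ 2 * dist x y ^ 2 + 2 * dist x z ^ 2 :=
  calc dist y z ^ 2 ≤ (dist x y + dist x z) ^ 2 :=
        pow_le_pow_left₀ dist_nonneg (dist_triangle_left y z x) 2
    _ ≤ 2 * (dist x y ^ 2 + dist x z ^ 2) := add_sq_le
    _ = 2 * dist x y ^ 2 + 2 * dist x z ^ 2 := mul_add _ _ _

theorem sum_dist_sq_comp_le {ι T : Type*} [Fintype ι] [PseudoMetricSpace T] (x : ι → T)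
    (σ₁ σ₂ : ι → ι) :
    ∑ i, dist (x (σ₁ i)) (x (σ₂ i)) ^ 2 ≤
      2 * ∑ i, dist (x i) (x (σ₁ i)) ^ 2 + 2 * ∑ i, dist (x i) (x (σ₂ i)) ^ 2 := by
  rw [mul_sum, mul_sum, ← sum_add_distrib]
  exact sum_le_sum fun i _ => dist_sq_le_two_mul_dist_sq_add _ _ _

theorem abs_half_noisy_triangle_sub_le {a b c r₀ r₁ r₂ e₁ e₂ e₁₂ ε : ℝ}
    (ha : 0 ≤ a) (hb : 0 ≤ b) (hc : 0 ≤ c) (he₁ : |e₁| ≤ ε) (he₂ : |e₂| ≤ ε) (he₁₂ : |e₁₂| ≤ ε) :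
    |1 / 2 * ((a + r₀ + r₁ + e₁) + (b + r₀ + r₂ + e₂) - (c + r₁ + r₂ + e₁₂)) - r₀| ≤
      1 / 2 * (a + b + c) + 3 / 2 * ε := by
  rw [abs_le] at he₁ he₂ he₁₂ ⊢
  constructor <;> linarith [he₁.1, he₁.2, he₂.1, he₂.2, he₁₂.1, he₁₂.2]

theorem noise_magnitude_average_error {T : Type*} [MetricSpace T] (n : ℕ) (hn : 0 < n)
    (x : Fin n → T) (r : Fin n → ℝ) (e Dt : Fin n → Fin n → ℝ) (ε δ₁ δ₂ : ℝ)
    (σ₁ σ₂ : Equiv.Perm (Fin n))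
    (h₁ : ∀ i, σ₁ i ≠ i) (h₂ : ∀ i, σ₂ i ≠ i) (h₁₂ : ∀ i, σ₂ i ≠ σ₁ i)
    (hD : ∀ i j, i ≠ j → Dt i j = dist (x i) (x j) ^ 2 + r i + r j + e i j)
    (he : ∀ i j, i ≠ j → |e i j| ≤ ε)
    (hδ₁ : ∑ i, dist (x i) (x (σ₁ i)) ^ 2 ≤ (n : ℝ) * δ₁)
    (hδ₂ : ∑ i, dist (x i) (x (σ₂ i)) ^ 2 ≤ (n : ℝ) * δ₂)
    (rh : Fin n → ℝ)
    (hrh : ∀ i, rh i = (1 / 2) * (Dt i (σ₁ i) + Dt i (σ₂ i) - Dt (σ₁ i) (σ₂ i))) :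
    (1 / (n : ℝ)) * ∑ i, |rh i - r i| ≤ (3 / 2) * (δ₁ + δ₂) + (3 / 2) * ε := by
  have pointwise : ∀ i, |rh i - r i| ≤ 1 / 2 * (dist (x i) (x (σ₁ i)) ^ 2
      + dist (x i) (x (σ₂ i)) ^ 2 + dist (x (σ₁ i)) (x (σ₂ i)) ^ 2) + 3 / 2 * ε := fun i => by
    rw [hrh i, hD i (σ₁ i) (h₁ i).symm, hD i (σ₂ i) (h₂ i).symm, hD (σ₁ i) (σ₂ i) (h₁₂ i).symm]
    exact abs_half_noisy_triangle_sub_le (sq_nonneg _) (sq_nonneg _) (sq_nonneg _)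
      (he _ _ (h₁ i).symm) (he _ _ (h₂ i).symm) (he _ _ (h₁₂ i).symm)
  have total : ∑ i, |rh i - r i| ≤ 1 / 2 * (∑ i, dist (x i) (x (σ₁ i)) ^ 2
      + ∑ i, dist (x i) (x (σ₂ i)) ^ 2 + ∑ i, dist (x (σ₁ i)) (x (σ₂ i)) ^ 2)
      + 3 / 2 * (n * ε) :=
    calc ∑ i, |rh i - r i| ≤ _ := sum_le_sum fun i _ => pointwise i
      _ = _ := by simp only [sum_add_distrib, ← mul_sum, sum_const, card_univ, Fintype.card_fin,
          nsmul_eq_mul]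
  have third := sum_dist_sq_comp_le x σ₁ σ₂
  rw [one_div_mul_eq_div, div_le_iff₀' (by exact_mod_cast hn)]
  linarith
end
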